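/- arXiv:alg-geom/9606003 — 2 statements merged into one kernel-verified Lean document; each statement's English description precedes it below -/
import Mathlib

section
/- Let V = V₁ ⊕ V₂ be a direct sum of finite-dimensional real vector spaces with r₁ = dim V₁, r₂ = dim V₂ and r₂ > 0, equipped with a norm ‖·‖. Let f : V → ℂ satisfy |f(x)| ≤ c/(1 + ‖x‖)^{r₁ + r₂ + 2ε} for all x ∈ V and some constants c, ε > 0. Let W ⊂ V₂ be a closed subgroup such that V₂/W is compact, and fix a Haar measure dw on W. Then there exists a constant c′ > 0 such that ∫_W |f(x₁ + w)| dw ≤ c′/(1 + ‖x₁‖)^{r₁ + ε} for every x₁ ∈ V₁. -/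
/-!
Since `‖(x₁, v)‖` dominates both `‖x₁‖` and `‖v‖`, the bound on `f` splits as
`c (1 + ‖x₁‖)^{-(r₁+ε)} (1 + ‖v‖)^{-(r₂+ε)}`, so it suffices that `w ↦ (1 + ‖w‖)^{-q}` has finite
integral over `W` for `q > r₂`. This holds for every closed subgroup `W`: thickening each point of
`W` to the unit ball around it and swapping the two integrals bounds `∫_W g dμ · vol(B(0, 1))` by
`∫_{V₂} g` times the `μ`-mass of a ball of radius `2` in `W`, because `g` changes by at most the
factor `2^q` on unit balls.
-/

open MeasureTheory Metric
open scoped ENNReal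

section Thickening

variable {E : Type*} [NormedAddCommGroup E] [MeasurableSpace E] [BorelSpace E]
  {W : AddSubgroup E} (μ : Measure W) [μ.IsAddHaarMeasure]

theorem measure_preimage_coe_closedBall_le (v : E) (r : ℝ) :
    μ (Subtype.val ⁻¹' closedBall v r) ≤ μ (closedBall 0 (2 * r)) := by
  rcases (Subtype.val ⁻¹' closedBall v r : Set W).eq_empty_or_nonempty with h | ⟨w₀, hw₀⟩
  · simp [h]
  calc μ (Subtype.val ⁻¹' closedBall v r) ≤ μ (closedBall w₀ (2 * r)) := by
        refine measure_mono fun w hw => ?_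
        rw [Set.mem_preimage, mem_closedBall] at hw hw₀
        rw [mem_closedBall, Subtype.dist_eq]
        linarith [dist_triangle_right (w : E) w₀ v]
    _ = μ (closedBall 0 (2 * r)) := Measure.addHaar_closedBall_center μ w₀ _

variable [ProperSpace E] [SFinite μ] (ν : Measure E) [ν.IsAddHaarMeasure]

theorem lintegral_addSubgroup_mul_le {g : E → ℝ≥0∞} (hg : Measurable g) {K : ℝ≥0∞}
    (hK : ∀ v w, dist w v ≤ 1 → g w ≤ K * g v) :
    (∫⁻ w : W, g w ∂μ) * ν (closedBall 0 1) ≤ K * μ (closedBall 0 2) * ∫⁻ v, g v ∂ν := by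
  set B : Set E := closedBall 0 1
  let F : W → E → ℝ≥0∞ := fun w v => g w * B.indicator 1 (v - w)
  have hB : Measurable (B.indicator (1 : E → ℝ≥0∞)) :=
    measurable_one.indicator measurableSet_closedBall
  have hF : Measurable (Function.uncurry F) :=
    (hg.comp (measurable_subtype_coe.comp measurable_fst)).mul
      (hB.comp (measurable_snd.sub (measurable_subtype_coe.comp measurable_fst)))
  have hthick (w : W) : g w * ν B = ∫⁻ v, F w v ∂ν := by
    have hBw : Measurable fun v : E => B.indicator 1 (v - w) := hB.comp (measurable_sub_const _)
    rw [lintegral_const_mul _ hBw, lintegral_sub_right_eq_self (B.indicator 1) (w : E),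
      lintegral_indicator_one measurableSet_closedBall]
  have hfiber (v : E) : ∫⁻ w, F w v ∂μ ≤ K * g v * μ (closedBall 0 2) := by
    set S : Set W := Subtype.val ⁻¹' closedBall v 1
    have hS : MeasurableSet S := measurable_subtype_coe measurableSet_closedBall
    have hBS (w : W) : v - w ∈ B ↔ w ∈ S := by
      rw [mem_closedBall_zero_iff, ← dist_eq_norm, dist_comm]
      rfl
    have hFS (w : W) : F w v ≤ K * g v * S.indicator 1 w := by
      by_cases hw : w ∈ S
      · simpa [F, hw, (hBS w).2 hw] using hK v w hw
      · simp [F, hw, mt (hBS w).1 hw]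
    calc ∫⁻ w, F w v ∂μ ≤ ∫⁻ w, K * g v * S.indicator 1 w ∂μ := lintegral_mono hFS
      _ = K * g v * μ S := by
        rw [lintegral_const_mul _ (measurable_one.indicator hS), lintegral_indicator_one hS]
      _ ≤ K * g v * μ (closedBall 0 2) := by
        gcongr K * g v * ?_
        simpa using measure_preimage_coe_closedBall_le μ v 1
  calc (∫⁻ w : W, g w ∂μ) * ν B = ∫⁻ w, ∫⁻ v, F w v ∂ν ∂μ := by
        have hgW : Measurable fun w : W => g w := hg.comp measurable_subtype_coe
        rw [← lintegral_mul_const _ hgW]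
        exact lintegral_congr hthick
    _ = ∫⁻ v, ∫⁻ w, F w v ∂μ ∂ν := lintegral_lintegral_swap hF.aemeasurable
    _ ≤ ∫⁻ v, K * μ (closedBall 0 2) * g v ∂ν := lintegral_mono fun v =>
        (hfiber v).trans_eq (by ring)
    _ = K * μ (closedBall 0 2) * ∫⁻ v, g v ∂ν := lintegral_const_mul _ hg

end Thickening

theorem rpow_neg_one_add_norm_le_of_dist_le_one {E : Type*} [SeminormedAddCommGroup E] {q : ℝ}
    (hq : 0 ≤ q) {v w : E} (h : dist w v ≤ 1) :
    (1 + ‖w‖) ^ (-q) ≤ 2 ^ q * (1 + ‖v‖) ^ (-q) := by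
  have hvw : (1 + ‖v‖) ^ q ≤ 2 ^ q * (1 + ‖w‖) ^ q := by
    rw [← Real.mul_rpow zero_le_two (by positivity)]
    gcongr
    linarith [norm_le_norm_add_norm_sub' v w, norm_nonneg w, dist_eq_norm w v, norm_sub_rev v w]
  rw [Real.rpow_neg (by positivity), Real.rpow_neg (by positivity), ← div_eq_mul_inv,
    le_div_iff₀ (by positivity), inv_mul_le_iff₀ (by positivity)]
  linarith

theorem lintegral_one_add_norm_rpow_neg_lt_top_of_isClosed {E : Type*} [NormedAddCommGroup E]
    [NormedSpace ℝ E] [FiniteDimensional ℝ E] [MeasurableSpace E] [BorelSpace E]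
    {W : AddSubgroup E} (hW : IsClosed (W : Set E)) (μ : Measure W) [μ.IsAddHaarMeasure]
    {q : ℝ} (hq : (Module.finrank ℝ E : ℝ) < q) :
    ∫⁻ w : W, ENNReal.ofReal ((1 + ‖(w : E)‖) ^ (-q)) ∂μ < ∞ := by
  have : ProperSpace W := ProperSpace.of_isClosed hW
  have hq0 : 0 ≤ q := (Nat.cast_nonneg _).trans hq.le
  let ν : Measure E := Measure.addHaar
  have h := lintegral_addSubgroup_mul_le μ ν (g := fun v => ENNReal.ofReal ((1 + ‖v‖) ^ (-q)))
    (by fun_prop) (K := ENNReal.ofReal (2 ^ q)) fun v w hwv => by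
      rw [← ENNReal.ofReal_mul (by positivity)]
      exact ENNReal.ofReal_le_ofReal (rpow_neg_one_add_norm_le_of_dist_le_one hq0 hwv)
  refine ENNReal.lt_top_of_mul_ne_top_left (h.trans_lt ?_).ne
    (measure_closedBall_pos ν 0 one_pos).ne'
  exact ENNReal.mul_lt_top (ENNReal.mul_lt_top ENNReal.ofReal_lt_top measure_closedBall_lt_top)
    (finite_integral_one_add_norm hq)

theorem div_one_add_norm_prod_rpow_le {E F : Type*} [SeminormedAddCommGroup E]
    [SeminormedAddCommGroup F] {c p q : ℝ} (hc : 0 ≤ c) (hp : 0 ≤ p) (hq : 0 ≤ q) (x : E) (y : F) :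
    c / (1 + ‖(x, y)‖) ^ (p + q) ≤ c / (1 + ‖x‖) ^ p * (1 + ‖y‖) ^ (-q) := by
  rw [Real.rpow_neg (by positivity), ← div_eq_mul_inv, div_div,
    Real.rpow_add (by positivity)]
  gcongr
  · exact norm_fst_le (x, y)
  · exact norm_snd_le (x, y)

theorem integral_decay_along_cocompact_subgroup_general
    (V₁ V₂ : Type*)
    [NormedAddCommGroup V₁] [NormedSpace ℝ V₁] [FiniteDimensional ℝ V₁]
    [NormedAddCommGroup V₂] [NormedSpace ℝ V₂] [FiniteDimensional ℝ V₂]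
    [MeasurableSpace V₂] [BorelSpace V₂]
    (f : V₁ × V₂ → ℂ) (c ε : ℝ) (hc : 0 < c) (hε : 0 < ε)
    (hf : ∀ x : V₁ × V₂,
      ‖f x‖ ≤ c / (1 + ‖x‖) ^
        ((Module.finrank ℝ V₁ : ℝ) + (Module.finrank ℝ V₂ : ℝ) + 2 * ε))
    (W : AddSubgroup V₂) (hW : IsClosed (W : Set V₂))
    (μ : Measure W) [μ.IsAddHaarMeasure] :
    ∃ c' : ℝ, 0 < c' ∧ ∀ x₁ : V₁,
      (∫⁻ w : W, ENNReal.ofReal ‖f (x₁, (w : V₂))‖ ∂μ)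
        ≤ ENNReal.ofReal (c' / (1 + ‖x₁‖) ^ ((Module.finrank ℝ V₁ : ℝ) + ε)) := by
  set p : ℝ := (Module.finrank ℝ V₁ : ℝ) + ε
  set q : ℝ := (Module.finrank ℝ V₂ : ℝ) + ε
  have hpq : (Module.finrank ℝ V₁ : ℝ) + (Module.finrank ℝ V₂ : ℝ) + 2 * ε = p + q := by ring
  have hI := lintegral_one_add_norm_rpow_neg_lt_top_of_isClosed hW μ
    (lt_add_of_pos_right (Module.finrank ℝ V₂ : ℝ) hε)
  set I := ∫⁻ w : W, ENNReal.ofReal ((1 + ‖(w : V₂)‖) ^ (-q)) ∂μ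
  refine ⟨c * (I.toReal + 1), by positivity, fun x₁ => ?_⟩
  have hA : 0 ≤ c / (1 + ‖x₁‖) ^ p := by positivity
  calc ∫⁻ w : W, ENNReal.ofReal ‖f (x₁, (w : V₂))‖ ∂μ
      ≤ ∫⁻ w : W, ENNReal.ofReal (c / (1 + ‖x₁‖) ^ p) *
          ENNReal.ofReal ((1 + ‖(w : V₂)‖) ^ (-q)) ∂μ := lintegral_mono fun w => by
        rw [← ENNReal.ofReal_mul hA]
        refine ENNReal.ofReal_le_ofReal ((hpq ▸ hf (x₁, w)).trans ?_)
        exact div_one_add_norm_prod_rpow_le hc.le (by positivity) (by positivity) _ _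
    _ = ENNReal.ofReal (c / (1 + ‖x₁‖) ^ p) * I := lintegral_const_mul' _ _ ENNReal.ofReal_ne_top
    _ ≤ ENNReal.ofReal (c / (1 + ‖x₁‖) ^ p) * ENNReal.ofReal (I.toReal + 1) := by
        gcongr
        exact (ENNReal.le_ofReal_iff_toReal_le hI.ne (by positivity)).2 (by linarith)
    _ = ENNReal.ofReal (c * (I.toReal + 1) / (1 + ‖x₁‖) ^ p) := by
        rw [← ENNReal.ofReal_mul hA, div_mul_eq_mul_div]

/-- (Lemma 2.15)  Let `V = V₁ ⊕ V₂` be a direct sum of finite-dimensional real vector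
spaces with `dim V₂ > 0`, and `f : V → ℂ` a function with
`|f(x)| ≤ c/(1+‖x‖)^{r₁+r₂+2ε}` for all `x` and some `c, ε > 0`.  Let `W ⊆ V₂` be a
closed cocompact subgroup with Haar measure `μ`.  Then there is `c′ > 0` such that
`∫_W |f(x₁+w)| dμ(w) ≤ c′/(1+‖x₁‖)^{r₁+ε}` for every `x₁ ∈ V₁`. -/
theorem integral_decay_along_cocompact_subgroup
    (V₁ V₂ : Type*)
    [NormedAddCommGroup V₁] [NormedSpace ℝ V₁] [FiniteDimensional ℝ V₁]
    [NormedAddCommGroup V₂] [NormedSpace ℝ V₂] [FiniteDimensional ℝ V₂]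
    [MeasurableSpace V₂] [BorelSpace V₂]
    (hr₂ : 0 < Module.finrank ℝ V₂)
    (f : V₁ × V₂ → ℂ) (c ε : ℝ) (hc : 0 < c) (hε : 0 < ε)
    (hf : ∀ x : V₁ × V₂,
      ‖f x‖ ≤ c / (1 + ‖x‖) ^
        ((Module.finrank ℝ V₁ : ℝ) + (Module.finrank ℝ V₂ : ℝ) + 2 * ε))
    (W : AddSubgroup V₂) (hW : IsClosed (W : Set V₂))
    [CompactSpace (V₂ ⧸ W)]
    (μ : Measure W) [μ.IsAddHaarMeasure] :
    ∃ c' : ℝ, 0 < c' ∧ ∀ x₁ : V₁,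
      (∫⁻ w : W, ENNReal.ofReal ‖f (x₁, (w : V₂))‖ ∂μ)
        ≤ ENNReal.ofReal (c' / (1 + ‖x₁‖) ^ ((Module.finrank ℝ V₁ : ℝ) + ε)) :=
  integral_decay_along_cocompact_subgroup_general V₁ V₂ f c ε hc hε hf W hW μ
end

section
/- Let A be a free abelian group of rank k, A_ℝ = A ⊗ ℝ, and Λ ⊂ A_ℝ a convex k-dimensional finitely generated rational polyhedral cone with Λ ∩ (−Λ) = {0}. Then for every s ∈ ℂ ⊗ A_ℝ with Re(s) in the interior Λ° of Λ, the function y ↦ e^{−⟨s,y⟩} is absolutely integrable on the dual cone Λ* ⊂ A*_ℝ, and the X-function X_Λ(s) = ∫_{Λ*} e^{−⟨s,y⟩} dy is a holomorphic function of s on the tube domain Λ° + iA_ℝ. -/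
open MeasureTheory

/-- The dual cone of a set `Λ ⊆ ℝ^k` (with respect to the standard pairing). -/
def dualCone {k : ℕ} (Λ : Set (Fin k → ℝ)) : Set (Fin k → ℝ) :=
  {y | ∀ x ∈ Λ, 0 ≤ ∑ i, x i * y i}

/-- `Λ ⊆ ℝ^k` is a finitely generated rational polyhedral cone. -/
def IsRationalPolyCone {k : ℕ} (Λ : Set (Fin k → ℝ)) : Prop :=
  ∃ (m : ℕ) (v : Fin m → Fin k → ℤ),
    Λ = {x | ∃ c : Fin m → ℝ, (∀ i, 0 ≤ c i) ∧ x = ∑ i, c i • fun j => (v i j : ℝ)}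

/-- `Λ ⊆ ℝ^k` is a convex `k`-dimensional finitely generated rational polyhedral cone
containing no line (`Λ ∩ (−Λ) = {0}`). -/
def IsGoodCone {k : ℕ} (Λ : Set (Fin k → ℝ)) : Prop :=
  IsRationalPolyCone Λ ∧ Submodule.span ℝ Λ = ⊤ ∧ Λ ∩ (-Λ) = {0}

/-- The `X`-function of a cone `Λ ⊆ ℝ^k` (lattice `ℤ^k`, so the normalized Haar
measure on the dual space is the Lebesgue measure):
`X_Λ(s) = ∫_{Λ*} e^{−⟨s,y⟩} dy`. -/
noncomputable def Xfun {k : ℕ} (Λ : Set (Fin k → ℝ)) (s : Fin k → ℂ) : ℂ :=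
  ∫ y in dualCone Λ, Complex.exp (-∑ i, s i * (y i : ℂ))

/-!
If the ball of radius `ε` about `Re s` lies in `Λ`, pairing `y ∈ Λ*` with `Re s - (ε/2) sign y ∈ Λ`
gives `⟨Re s, y⟩ ≥ (ε/2) ∑ |yᵢ|`. So `|e^{-⟨s,y⟩}|` is dominated on `Λ*` by `e^{-(ε/2) ∑ |yᵢ|}`, a
product of integrable functions of one variable. For `s` within `ε/4` of `s₀` the same estimate
bounds the derivative `-⟨·, y⟩ e^{-⟨s,y⟩}` by a multiple of `e^{-(ε/8) ∑ |yᵢ|}`, so the integral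
may be differentiated under the integral sign.
-/

open Set Metric Filter

theorem integrable_exp_neg_mul_abs {a : ℝ} (ha : 0 < a) :
    Integrable fun t : ℝ => Real.exp (-(a * |t|)) := by
  have h := (integrable_fun_norm_addHaar (volume : Measure ℝ)
    (f := fun r : ℝ => Real.exp (-(a * r)))).2 ?_
  · simpa only [Real.norm_eq_abs] using h
  · simpa [Module.finrank_self] using exp_neg_integrableOn_Ioi 0 ha

theorem integrable_exp_neg_mul_sum_abs {ι : Type*} [Fintype ι] {a : ℝ} (ha : 0 < a) :
    Integrable fun y : ι → ℝ => Real.exp (-(a * ∑ i, |y i|)) := by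
  simpa only [Finset.mul_sum, ← Finset.sum_neg_distrib, Real.exp_sum, volume_pi] using
    Integrable.fintype_prod (fun _ : ι => integrable_exp_neg_mul_abs ha)

theorem isClosed_dualCone {k : ℕ} (Λ : Set (Fin k → ℝ)) : IsClosed (dualCone Λ) := by
  simp only [dualCone, ofPred_forall]
  exact isClosed_biInter fun x _ => isClosed_le continuous_const (by fun_prop)

theorem exists_pos_mul_sum_abs_le_of_mem_interior {k : ℕ} {Λ : Set (Fin k → ℝ)}
    {x₀ : Fin k → ℝ} (hx₀ : x₀ ∈ interior Λ) :
    ∃ a > 0, ∀ y ∈ dualCone Λ, a * ∑ i, |y i| ≤ ∑ i, x₀ i * y i := by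
  obtain ⟨ε, hε, hball⟩ := Metric.mem_nhds_iff.1 (mem_interior_iff_mem_nhds.1 hx₀)
  refine ⟨ε / 2, half_pos hε, fun y hy => ?_⟩
  set z : Fin k → ℝ := fun i => ε / 2 * SignType.sign (y i)
  have hz : ‖z‖ < ε := by
    refine ((pi_norm_le_iff_of_nonneg (half_pos hε).le).2 fun i => ?_).trans_lt
      (half_lt_self hε)
    rw [Real.norm_eq_abs, abs_mul, abs_of_pos (half_pos hε)]
    rcases SignType.sign (y i) with _ | _ | _ <;> simp [hε.le, div_nonneg]
  have h := hy (x₀ - z) (hball (by rwa [mem_ball, dist_eq_norm, sub_sub_cancel_left, norm_neg]))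
  simp only [z, Pi.sub_apply, sub_mul, Finset.sum_sub_distrib, mul_assoc, sign_mul_self,
    ← Finset.mul_sum] at h
  linarith

theorem mul_exp_neg_two_mul_le {b : ℝ} (hb : 0 < b) (t : ℝ) :
    t * Real.exp (-(2 * b * t)) ≤ b⁻¹ * Real.exp (-(b * t)) := by
  have ht : t ≤ b⁻¹ * Real.exp (b * t) := by
    rw [le_inv_mul_iff₀ hb]
    linarith [Real.add_one_le_exp (b * t)]
  calc t * Real.exp (-(2 * b * t)) ≤ b⁻¹ * Real.exp (b * t) * Real.exp (-(2 * b * t)) :=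
        mul_le_mul_of_nonneg_right ht (Real.exp_pos _).le
    _ = b⁻¹ * Real.exp (-(b * t)) := by rw [mul_assoc, ← Real.exp_add]; ring_nf

section Pairing

variable {ι : Type*} [Fintype ι]

noncomputable def pairingCLM (y : ι → ℝ) : (ι → ℂ) →L[ℂ] ℂ :=
  ∑ i, (y i : ℂ) • ContinuousLinearMap.proj i

@[simp]
theorem pairingCLM_apply (y : ι → ℝ) (s : ι → ℂ) : pairingCLM y s = ∑ i, s i * y i := by
  simp [pairingCLM, mul_comm]

theorem re_pairingCLM_apply (y : ι → ℝ) (s : ι → ℂ) :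
    (pairingCLM y s).re = ∑ i, (s i).re * y i := by
  simp [Complex.re_sum]

theorem norm_pairingCLM_le (y : ι → ℝ) : ‖pairingCLM y‖ ≤ ∑ i, |y i| :=
  ContinuousLinearMap.opNorm_le_bound _ (by positivity) fun s => calc
    ‖pairingCLM y s‖ ≤ ∑ i, ‖s i * y i‖ := by rw [pairingCLM_apply]; exact norm_sum_le _ _
    _ ≤ ∑ i, |y i| * ‖s‖ := Finset.sum_le_sum fun i _ => by
      rw [norm_mul, Complex.norm_real, Real.norm_eq_abs, mul_comm]
      exact mul_le_mul_of_nonneg_left (norm_le_pi_norm s i) (abs_nonneg _)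
    _ = (∑ i, |y i|) * ‖s‖ := (Finset.sum_mul _ _ _).symm

theorem continuous_pairingCLM : Continuous (pairingCLM : (ι → ℝ) → (ι → ℂ) →L[ℂ] ℂ) := by
  unfold pairingCLM
  fun_prop

theorem hasFDerivAt_cexp_neg_pairing (y : ι → ℝ) (s : ι → ℂ) :
    HasFDerivAt (fun s : ι → ℂ => Complex.exp (-∑ i, s i * y i))
      (Complex.exp (-∑ i, s i * y i) • -pairingCLM y) s := by
  simpa using (-pairingCLM y).hasFDerivAt.cexp

theorem norm_cexp_neg_pairing (s : ι → ℂ) (y : ι → ℝ) :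
    ‖Complex.exp (-∑ i, s i * y i)‖ = Real.exp (-∑ i, (s i).re * y i) := by
  simp [Complex.norm_exp, Complex.re_sum]

theorem sum_re_mul_sub_le {s s₀ : ι → ℂ} {r : ℝ} (y : ι → ℝ) (hs : ‖s - s₀‖ ≤ r) :
    ∑ i, (s₀ i).re * y i - r * ∑ i, |y i| ≤ ∑ i, (s i).re * y i := by
  have h := (Complex.abs_re_le_norm _).trans ((pairingCLM y).le_opNorm (s - s₀))
  rw [map_sub, Complex.sub_re, re_pairingCLM_apply, re_pairingCLM_apply] at h
  have := mul_le_mul (norm_pairingCLM_le y) hs (norm_nonneg _) (by positivity)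
  linarith [(abs_le.1 h).1]

theorem norm_cexp_neg_pairing_smul_le {s s₀ : ι → ℂ} {y : ι → ℝ} {a : ℝ} (ha : 0 < a)
    (hy : a * ∑ i, |y i| ≤ ∑ i, (s₀ i).re * y i) (hs : ‖s - s₀‖ ≤ a / 2) :
    ‖Complex.exp (-∑ i, s i * y i) • -pairingCLM y‖ ≤
      (a / 4)⁻¹ * Real.exp (-(a / 4 * ∑ i, |y i|)) := calc
  _ = Real.exp (-∑ i, (s i).re * y i) * ‖pairingCLM y‖ := by
    rw [norm_smul, norm_neg, norm_cexp_neg_pairing]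
  _ ≤ Real.exp (-(2 * (a / 4) * ∑ i, |y i|)) * ∑ i, |y i| := by
    refine mul_le_mul (Real.exp_le_exp.2 ?_) (norm_pairingCLM_le y) (norm_nonneg _)
      (Real.exp_pos _).le
    linarith [sum_re_mul_sub_le y hs]
  _ ≤ (a / 4)⁻¹ * Real.exp (-(a / 4 * ∑ i, |y i|)) := by
    rw [mul_comm]
    exact mul_exp_neg_two_mul_le (by positivity) _

end Pairing

theorem integrableOn_cexp_neg_pairing_dualCone {k : ℕ} {Λ : Set (Fin k → ℝ)} {s : Fin k → ℂ}
    (hs : (fun i => (s i).re) ∈ interior Λ) :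
    IntegrableOn (fun y : Fin k → ℝ => Complex.exp (-∑ i, s i * (y i : ℂ))) (dualCone Λ) := by
  obtain ⟨a, ha, hcoer⟩ := exists_pos_mul_sum_abs_le_of_mem_interior hs
  refine (integrable_exp_neg_mul_sum_abs ha).integrableOn.mono'
    (by fun_prop : Continuous _).aestronglyMeasurable.restrict ?_
  filter_upwards [ae_restrict_mem (isClosed_dualCone Λ).measurableSet] with y hy
  rw [norm_cexp_neg_pairing]
  exact Real.exp_le_exp.2 (neg_le_neg (hcoer y hy))

theorem hasFDerivAt_Xfun {k : ℕ} {Λ : Set (Fin k → ℝ)} {s₀ : Fin k → ℂ}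
    (hs₀ : (fun i => (s₀ i).re) ∈ interior Λ) :
    HasFDerivAt (Xfun Λ)
      (∫ y in dualCone Λ, Complex.exp (-∑ i, s₀ i * (y i : ℂ)) • -pairingCLM y) s₀ := by
  obtain ⟨a, ha, hcoer⟩ := exists_pos_mul_sum_abs_le_of_mem_interior hs₀
  have hcont (s : Fin k → ℂ) :
      Continuous fun y : Fin k → ℝ => Complex.exp (-∑ i, s i * (y i : ℂ)) := by
    fun_prop
  refine hasFDerivAt_integral_of_dominated_of_fderiv_le (μ := volume.restrict (dualCone Λ))
    (F := fun s y => Complex.exp (-∑ i, s i * (y i : ℂ)))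
    (F' := fun s y => Complex.exp (-∑ i, s i * (y i : ℂ)) • -pairingCLM y)
    (bound := fun y => (a / 4)⁻¹ * Real.exp (-(a / 4 * ∑ i, |y i|)))
    (closedBall_mem_nhds s₀ (half_pos ha)) ?_ ?_ ?_ ?_ ?_ ?_
  · exact Eventually.of_forall fun s => (hcont s).aestronglyMeasurable
  · exact integrableOn_cexp_neg_pairing_dualCone hs₀
  · exact ((hcont s₀).smul continuous_pairingCLM.neg).aestronglyMeasurable
  · filter_upwards [ae_restrict_mem (isClosed_dualCone Λ).measurableSet] with y hy s hs
    exact norm_cexp_neg_pairing_smul_le ha (hcoer y hy) (mem_closedBall_iff_norm.1 hs)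
  · exact ((integrable_exp_neg_mul_sum_abs (by positivity)).const_mul _).integrableOn
  · exact Eventually.of_forall fun y s _ => hasFDerivAt_cexp_neg_pairing y s

theorem Xfun_integrable_holomorphic_general (k : ℕ) (Λ : Set (Fin k → ℝ)) :
    (∀ s : Fin k → ℂ, (fun i => (s i).re) ∈ interior Λ →
      IntegrableOn (fun y : Fin k → ℝ => Complex.exp (-∑ i, s i * (y i : ℂ)))
        (dualCone Λ)) ∧
    DifferentiableOn ℂ (Xfun Λ) {s : Fin k → ℂ | (fun i => (s i).re) ∈ interior Λ} :=
  ⟨fun _ hs => integrableOn_cexp_neg_pairing_dualCone hs,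
    fun _ hs => (hasFDerivAt_Xfun hs).differentiableAt.differentiableWithinAt⟩

/-- For a convex full-dimensional finitely generated rational polyhedral cone `Λ ⊆ ℝ^k`
with `Λ ∩ (−Λ) = {0}`: for every `s` with `Re(s) ∈ Λ°` the function `y ↦ e^{−⟨s,y⟩}` is
absolutely integrable on the dual cone `Λ*`, and `X_Λ` is holomorphic on the tube domain
`Λ° + iℝ^k`. -/
theorem Xfun_integrable_holomorphic (k : ℕ) (Λ : Set (Fin k → ℝ)) (hΛ : IsGoodCone Λ) :
    (∀ s : Fin k → ℂ, (fun i => (s i).re) ∈ interior Λ →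
      IntegrableOn (fun y : Fin k → ℝ => Complex.exp (-∑ i, s i * (y i : ℂ)))
        (dualCone Λ)) ∧
    DifferentiableOn ℂ (Xfun Λ) {s : Fin k → ℂ | (fun i => (s i).re) ∈ interior Λ} :=
  Xfun_integrable_holomorphic_general k Λ
end
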